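/- Let ℓ = (ℓ₁,…,ℓₙ) be positive reals with ℓ₁ ≤ ⋯ ≤ ℓ_{n-1}. Then d_k(ℓ), the number of (k+1)-element subsets J ⊆ {1,…,n} containing both n−1 and n that are short with respect to ℓ, equals α_{k-1}(L), the number of k-element subsets of {1,…,n−1} containing n−1 that are short with respect to L = (ℓ₁,…,ℓ_{n-2}, ℓ_{n-1} + ℓ_n). -/
import Mathlib
set_option maxHeartbeats 1000000


/-- For ordered `ℓ`, the number `d_k(ℓ)` of `(k+1)`-element subsets of
`{1,…,n}` containing both `n-1` (0-based index `n-2`) and `n` (0-based index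
`n-1`) that are short with respect to `ℓ` equals `α_{k-1}(L)`, the number of
`k`-element subsets of `{1,…,n-1}` containing `n-1` that are short with
respect to `L = (ℓ₁,…,ℓ_{n-2}, ℓ_{n-1} + ℓ_n)`. -/
theorem stmt4 (n k : ℕ) (hn : 2 ≤ n) (ℓ : Fin n → ℝ) (hpos : ∀ i, 0 < ℓ i)
    (hmono : ∀ i j : Fin n, (i : ℕ) ≤ (j : ℕ) → (j : ℕ) < n - 1 → ℓ i ≤ ℓ j)
    (L : Fin (n - 1) → ℝ)
    (hL : ∀ i : Fin (n - 1), L i =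
      if (i : ℕ) = n - 2 then ℓ ⟨n - 2, by omega⟩ + ℓ ⟨n - 1, by omega⟩
      else ℓ ⟨(i : ℕ), by omega⟩) :
    {J : Finset (Fin n) | J.card = k + 1 ∧ (⟨n - 2, by omega⟩ : Fin n) ∈ J ∧
        (⟨n - 1, by omega⟩ : Fin n) ∈ J ∧
        ∑ i ∈ J, ℓ i < ∑ i ∈ Jᶜ, ℓ i}.ncard =
    {J : Finset (Fin (n - 1)) | J.card = k ∧ (⟨n - 2, by omega⟩ : Fin (n - 1)) ∈ J ∧
        ∑ i ∈ J, L i < ∑ i ∈ Jᶜ, L i}.ncard := by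
  have h2 : n - 2 < n - 1 := by omega
  set a : Fin n := ⟨n - 2, by omega⟩ with ha
  set b : Fin n := ⟨n - 1, by omega⟩ with hb
  set a' : Fin (n - 1) := ⟨n - 2, by omega⟩ with ha'
  set emb : Fin (n - 1) ↪ Fin n := Fin.castLEEmb (by omega) with hemb
  have hembval : ∀ j : Fin (n - 1), ((emb j : Fin n) : ℕ) = (j : ℕ) := fun j => rfl
  have hembA : emb a' = a := by
    apply Fin.ext; rw [hembval]
  have hbnot : ∀ J' : Finset (Fin (n - 1)), b ∉ J'.map emb := by
    intro J' hmem
    obtain ⟨j, -, hj⟩ := Finset.mem_map.mp hmem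
    have h1 := congrArg Fin.val hj
    rw [hembval] at h1
    have := j.isLt
    simp [hb] at h1
    omega
  have hLj : ∀ j : Fin (n - 1), L j = ℓ (emb j) + (if j = a' then ℓ b else 0) := by
    intro j
    rw [hL]
    by_cases hj : (j : ℕ) = n - 2
    · have hja : j = a' := Fin.ext hj
      rw [if_pos hj, if_pos hja, hja, hembA]
    · have hja : j ≠ a' := fun h => hj (by rw [h])
      rw [if_neg hj, if_neg hja, add_zero]
      rfl
  have hsumJ' : ∀ J' : Finset (Fin (n - 1)), a' ∈ J' →
      ∑ j ∈ J', L j = (∑ j ∈ J', ℓ (emb j)) + ℓ b := by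
    intro J' hmem
    calc ∑ j ∈ J', L j = ∑ j ∈ J', (ℓ (emb j) + (if j = a' then ℓ b else 0)) := by
          exact Finset.sum_congr rfl fun j _ => hLj j
      _ = (∑ j ∈ J', ℓ (emb j)) + ∑ j ∈ J', (if j = a' then ℓ b else 0) :=
          Finset.sum_add_distrib
      _ = (∑ j ∈ J', ℓ (emb j)) + ℓ b := by
          rw [Finset.sum_ite_eq' J' a' (fun _ => ℓ b), if_pos hmem]
  have hmemrec : ∀ (J : Finset (Fin n)) (i : Fin n), i ≠ b → i ∈ J →
      ∃ j : Fin (n - 1), emb j = i := by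
    intro J i hib hiJ
    have hlt : (i : ℕ) < n - 1 := by
      have h1 := i.isLt
      have h3 : (i : ℕ) ≠ n - 1 := fun h => hib (Fin.ext h)
      omega
    exact ⟨⟨(i : ℕ), hlt⟩, Fin.ext (hembval _)⟩
  have huniv : (Finset.univ : Finset (Fin n)) = insert b (Finset.univ.map emb) := by
    ext i
    simp only [Finset.mem_univ, Finset.mem_insert, Finset.mem_map, true_iff]
    by_cases hib : i = b
    · exact Or.inl hib
    · obtain ⟨j, hj⟩ := hmemrec Finset.univ i hib (Finset.mem_univ i)
      exact Or.inr ⟨j, trivial, hj⟩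
  have htot : ∑ j : Fin (n - 1), L j = ∑ i : Fin n, ℓ i := by
    rw [hsumJ' Finset.univ (Finset.mem_univ _), huniv,
      Finset.sum_insert (hbnot Finset.univ), Finset.sum_map, add_comm]
  -- the map
  set g : Finset (Fin (n - 1)) → Finset (Fin n) := fun J' => insert b (J'.map emb) with hg
  have hginj : Function.Injective g := by
    intro s t hst
    have h1 : (insert b (s.map emb)).erase b = (insert b (t.map emb)).erase b := by
      rw [show insert b (s.map emb) = insert b (t.map emb) from hst]
    rw [Finset.erase_insert (hbnot s), Finset.erase_insert (hbnot t)] at h1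
    exact Finset.map_injective emb h1
  have hgcard : ∀ J' : Finset (Fin (n - 1)), (g J').card = J'.card + 1 := by
    intro J'
    rw [hg]
    simp only
    rw [Finset.card_insert_of_notMem (hbnot _), Finset.card_map]
  have hgsum : ∀ J' : Finset (Fin (n - 1)), a' ∈ J' →
      ∑ i ∈ g J', ℓ i = ∑ j ∈ J', L j := by
    intro J' hmem
    rw [hg]
    simp only
    rw [Finset.sum_insert (hbnot J'), Finset.sum_map, hsumJ' J' hmem, add_comm]
  have hsetEq : {J : Finset (Fin n) | J.card = k + 1 ∧ a ∈ J ∧ b ∈ J ∧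
        ∑ i ∈ J, ℓ i < ∑ i ∈ Jᶜ, ℓ i} =
      g '' {J : Finset (Fin (n - 1)) | J.card = k ∧ a' ∈ J ∧ ∑ i ∈ J, L i < ∑ i ∈ Jᶜ, L i} := by
    ext J
    simp only [Set.mem_setOf_eq, Set.mem_image]
    constructor
    · rintro ⟨hcard, haJ, hbJ, hshort⟩
      refine ⟨Finset.univ.filter (fun j => emb j ∈ J), ?_⟩
      have hJeq : g (Finset.univ.filter (fun j => emb j ∈ J)) = J := by
        rw [hg]
        simp only
        ext i
        simp only [Finset.mem_insert, Finset.mem_map, Finset.mem_filter,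
          Finset.mem_univ, true_and]
        constructor
        · rintro (rfl | ⟨j, hj, rfl⟩)
          · exact hbJ
          · exact hj
        · intro hiJ
          by_cases hib : i = b
          · exact Or.inl hib
          · obtain ⟨j, hj⟩ := hmemrec J i hib hiJ
            exact Or.inr ⟨j, by rwa [hj], hj⟩
      have hmem : a' ∈ Finset.univ.filter (fun j => emb j ∈ J) := by
        simp only [Finset.mem_filter, Finset.mem_univ, true_and]
        rwa [hembA]
      refine ⟨⟨?_, hmem, ?_⟩, hJeq⟩
      · have h1 := hgcard (Finset.univ.filter (fun j => emb j ∈ J))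
        rw [hJeq, hcard] at h1
        omega
      · have hs := hgsum _ hmem
        rw [hJeq] at hs
        have e1 := Finset.sum_add_sum_compl J ℓ
        have e2 := Finset.sum_add_sum_compl (Finset.univ.filter (fun j => emb j ∈ J)) L
        linarith [htot]
    · rintro ⟨J', ⟨hcard, haJ', hshort⟩, rfl⟩
      have hs := hgsum J' haJ'
      refine ⟨?_, ?_, ?_, ?_⟩
      · rw [hgcard, hcard]
      · rw [hg]
        exact Finset.mem_insert_of_mem (by rw [← hembA]; exact Finset.mem_map_of_mem _ haJ')
      · exact Finset.mem_insert_self _ _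
      · have e1 := Finset.sum_add_sum_compl (g J') ℓ
        have e2 := Finset.sum_add_sum_compl J' L
        linarith [htot]
  rw [hsetEq, Set.ncard_image_of_injective _ hginj]
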